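/- arXiv:1612.03998 — 2 statements merged into one kernel-verified Lean document; each statement's English description precedes it below -/
import Mathlib

section
/- Let V = ℂ^m, G = O(V), and suppose Λ ∈ (V^{⊗r_c})^{G,det} is harmonic with (Λ,Λ) ≠ 0. If r < r_c then (V^{⊗r})^{G,det} = 0. -/
open scoped BigOperators

namespace EnhBrauer

/-- Coordinates of a tensor in `V^{⊗r}` for `V = ℂ^m`, w.r.t. the orthonormal basis. -/
abbrev Tens (m r : ℕ) := (Fin r → Fin m) → ℂ

/-- `A` is an orthogonal matrix: `A.transpose * A = 1`. -/
def IsOrth {m : ℕ} (A : Matrix (Fin m) (Fin m) ℂ) : Prop := A.transpose * A = 1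

/-- The diagonal action of a matrix on `V^{⊗r}` in coordinates. -/
noncomputable def act {m r : ℕ} (A : Matrix (Fin m) (Fin m) ℂ) (x : Tens m r) : Tens m r :=
  fun f => ∑ f' : Fin r → Fin m, (∏ i, A (f i) (f' i)) * x f'

/-- Action of a permutation on `V^{⊗r}` by permuting the tensor factors. -/
def permAct {m r : ℕ} (σ : Equiv.Perm (Fin r)) (x : Tens m r) : Tens m r :=
  fun f => x (f ∘ σ)

/-- The symmetric bilinear form on `V^{⊗r}` extending `(·,·)` multiplicatively. -/
noncomputable def form {m r : ℕ} (x y : Tens m r) : ℂ :=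
  ∑ f : Fin r → Fin m, x f * y f

/-- `Č = ∑ i, e i ⊗ e i ∈ V ⊗ V`. -/
def cC (m : ℕ) : Tens m 2 := fun f => if f 0 = f 1 then 1 else 0

/-- `Ĉ : V ⊗ V → ℂ`, `v ⊗ w ↦ (v, w)`. -/
noncomputable def hatC {m : ℕ} (x : Tens m 2) : ℂ := ∑ i : Fin m, x (fun _ => i)

/-- `Č^{⊗d} ∈ V^{⊗2d}`. -/
def cCpow (m d : ℕ) : Tens m (2 * d) :=
  fun f => ∏ i : Fin d,
    (if f ⟨2 * i, by have := i.isLt; omega⟩ = f ⟨2 * i + 1, by have := i.isLt; omega⟩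
      then (1 : ℂ) else 0)

/-- Tensor product (concatenation) of tensors. -/
def tmul {m r s : ℕ} (x : Tens m r) (y : Tens m s) : Tens m (r + s) :=
  fun f => x (fun i => f (Fin.castAdd s i)) * y (fun j => f (Fin.natAdd r j))

/-- `Λ = (m!)⁻¹ ∑_{σ ∈ S_m} ε(σ) σ · (e 1 ⊗ ⋯ ⊗ e m)`. -/
noncomputable def Lam (m : ℕ) : Tens m m :=
  fun f => ((m.factorial : ℂ))⁻¹ *
    ∑ σ : Equiv.Perm (Fin m), ((Equiv.Perm.sign σ : ℤ) : ℂ) * (if ∀ i, f i = σ i then 1 else 0)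

/-- The total antisymmetrizer `Σ_r = ∑_{π ∈ S_r} ε(π) π` on `V^{⊗r}`. -/
noncomputable def SigmaA (m r : ℕ) : Tens m r → Tens m r :=
  fun x f => ∑ σ : Equiv.Perm (Fin r), ((Equiv.Perm.sign σ : ℤ) : ℂ) * x (f ∘ σ)

/-- `x ∈ V^{⊗r}` is harmonic: contracting any two distinct tensor factors with
the form gives `0`. -/
def Harmonic {m r : ℕ} (x : Tens m r) : Prop :=
  ∀ a b : Fin r, a ≠ b → ∀ f : Fin r → Fin m,
    ∑ j : Fin m, x (Function.update (Function.update f a j) b j) = 0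

lemma act_add {m r : ℕ} (A : Matrix (Fin m) (Fin m) ℂ) (x y : Tens m r) :
    act A (x + y) = act A x + act A y := by
  funext f
  simp [act, mul_add, Finset.sum_add_distrib]

lemma act_zero {m r : ℕ} (A : Matrix (Fin m) (Fin m) ℂ) :
    act A (0 : Tens m r) = 0 := by
  funext f; simp [act]

lemma act_smul {m r : ℕ} (A : Matrix (Fin m) (Fin m) ℂ) (c : ℂ) (x : Tens m r) :
    act A (c • x) = c • act A x := by
  funext f
  simp only [act, Pi.smul_apply, smul_eq_mul, Finset.mul_sum]
  exact Finset.sum_congr rfl fun f' _ => by ring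

/-- The submodule of tensors in `V^{⊗r}` invariant under all matrices satisfying `P`. -/
noncomputable def invSub (m r : ℕ) (P : Matrix (Fin m) (Fin m) ℂ → Prop) :
    Submodule ℂ (Tens m r) where
  carrier := {x | ∀ A, P A → act A x = x}
  add_mem' := by intro x y hx hy A hA; rw [act_add, hx A hA, hy A hA]
  zero_mem' := by intro A hA; exact act_zero A
  smul_mem' := by intro c x hx A hA; rw [act_smul, hx A hA]

/-- The submodule of linear maps `V^{⊗s} → V^{⊗t}` equivariant for all matrices
satisfying `P`. -/
noncomputable def homSub (m s t : ℕ) (P : Matrix (Fin m) (Fin m) ℂ → Prop) :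
    Submodule ℂ (Tens m s →ₗ[ℂ] Tens m t) where
  carrier := {T | ∀ A, P A → ∀ x, T (act A x) = act A (T x)}
  add_mem' := by
    intro T S hT hS A hA x
    simp [hT A hA x, hS A hA x, act_add]
  zero_mem' := by
    intro A hA x
    simp [act_zero]
  smul_mem' := by
    intro c T hT A hA x
    simp [hT A hA x, act_smul]

/-! If `r < r_c ≤ m`, every index `f : Fin r → Fin m` misses some value `j`, and the reflection
in `e j` (determinant `-1`) fixes the coordinate `x f`, so `x f = 0`.

If `r_c > m` we show `Λ = 0`. Squares of orthogonal matrices have determinant `1`, so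
differentiating along the squares of plane rotations shows that `Λ` is killed by `𝔰𝔬(m)`:
`E j k Λ = E k j Λ`, where `E j k = unitAct j k` replaces one index `j` by `k`. For harmonic
`Λ` this makes the Casimir `∑ j k, E j k (E k j Λ)` act as multiplication by `r_c`, and since
`E j k` and `E k j` are adjoint for the Hermitian norm,
`r_c ‖Λ‖² = ∑ j k, ‖E k j Λ‖² ≥ ∑ j, ‖E j j Λ‖² = ∑ f, (∑ j, c_j(f)²) |Λ f|²`,
where `c_j(f)` is the number of occurrences of `j` in `f`. By pigeonhole `∑ j, c_j(f)² > r_c`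
for every `f`, hence `Λ = 0`. -/

section

open Finset Function Matrix

variable {m n : ℕ}

lemma act_diagonal_apply (d : Fin m → ℂ) (y : Tens m n) (f : Fin n → Fin m) :
    act (diagonal d) y f = (∏ i, d (f i)) * y f := by
  rw [act, Finset.sum_eq_single f]
  · simp
  · intro f' _ hne
    obtain ⟨i, hi⟩ : ∃ i, f i ≠ f' i := by
      by_contra! h
      exact hne (funext h).symm
    rw [Finset.prod_eq_zero (mem_univ i) (diagonal_apply_ne d hi), zero_mul]
  · simp

lemma apply_eq_zero_of_det_covariant {y : Tens m n}
    (hy : ∀ A : Matrix (Fin m) (Fin m) ℂ, IsOrth A → act A y = A.det • y)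
    {f : Fin n → Fin m} {j : Fin m} (hj : ∀ i, f i ≠ j) : y f = 0 := by
  set d : Fin m → ℂ := fun a => if a = j then -1 else 1
  have horth : IsOrth (diagonal d) := by
    rw [IsOrth, diagonal_transpose, diagonal_mul_diagonal, ← diagonal_one]
    congr 1
    funext a
    by_cases ha : a = j <;> simp [d, ha]
  have hdet : (diagonal d).det = -1 := by
    rw [det_diagonal, Finset.prod_eq_single j (fun a _ ha => if_neg ha) (by simp)]
    simp
  have hact := congrFun (hy _ horth) f
  rw [act_diagonal_apply, hdet, Finset.prod_eq_one (fun i _ => if_neg (hj i))] at hact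
  simp only [one_mul, Pi.smul_apply, smul_eq_mul, neg_one_mul] at hact
  linear_combination hact / 2

lemma eq_zero_of_det_covariant_of_lt {y : Tens m n}
    (hy : ∀ A : Matrix (Fin m) (Fin m) ℂ, IsOrth A → act A y = A.det • y) (hnm : n < m) :
    y = 0 := by
  funext f
  obtain ⟨j, hj⟩ : ∃ j, ∀ i, f i ≠ j := by
    by_contra! hsurj
    have := Fintype.card_le_of_surjective f hsurj
    simp only [Fintype.card_fin] at this
    omega
  exact apply_eq_zero_of_det_covariant hy hj

lemma sum_filter_eqOn_erase_eq_sum_update (i : Fin n) (f : Fin n → Fin m)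
    (F : (Fin n → Fin m) → ℂ) :
    ∑ f' with ∀ i' ∈ univ.erase i, f i' = f' i', F f' = ∑ v, F (update f i v) := by
  have himage :
      ({f' | ∀ i' ∈ univ.erase i, f i' = f' i'} : Finset _) = univ.image (update f i) := by
    ext f'
    simp only [mem_filter, mem_univ, and_true, true_and, mem_erase, ne_eq, mem_image]
    constructor
    · intro h
      refine ⟨f' i, funext fun i' => ?_⟩
      by_cases hi : i' = i
      · subst hi; simp
      · simp [hi, h i' hi]
    · rintro ⟨v, rfl⟩ i' hi
      simp [hi]
  rw [himage, sum_image fun _ _ _ _ h => update_injective f i h]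

noncomputable def lieAct (X : Matrix (Fin m) (Fin m) ℂ) (y : Tens m n) : Tens m n :=
  fun f => ∑ i, ∑ v, X (f i) v * y (update f i v)

noncomputable def unitAct (j k : Fin m) (y : Tens m n) : Tens m n :=
  fun f => ∑ i, if f i = j then y (update f i k) else 0

lemma lieAct_add (X Y : Matrix (Fin m) (Fin m) ℂ) (y : Tens m n) :
    lieAct (X + Y) y = lieAct X y + lieAct Y y := by
  funext f
  simp [lieAct, add_mul, sum_add_distrib]

lemma lieAct_single_sub_single (j k : Fin m) (y : Tens m n) (f : Fin n → Fin m) :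
    lieAct (single j k 1 - single k j 1) y f = unitAct j k y f - unitAct k j y f := by
  simp [lieAct, unitAct, single_apply, sub_mul, sum_sub_distrib, ite_and, eq_comm]

lemma hasDerivAt_act_apply {R : ℂ → Matrix (Fin m) (Fin m) ℂ} {X : Matrix (Fin m) (Fin m) ℂ}
    (hR : ∀ a b, HasDerivAt (fun t => R t a b) (X a b) 0) (hR0 : R 0 = 1)
    (y : Tens m n) (f : Fin n → Fin m) :
    HasDerivAt (fun t => act (R t) y f) (lieAct X y f) 0 := by
  refine (HasDerivAt.fun_sum (u := univ) fun f' _ =>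
    (HasDerivAt.fun_finsetProd (u := univ) fun i _ => hR (f i) (f' i)).mul_const
      (y f')).congr_deriv ?_
  simp only [hR0, one_apply, prod_boole, smul_eq_mul, ite_mul, one_mul, zero_mul, sum_mul]
  rw [sum_comm]
  refine sum_congr rfl fun i _ => ?_
  rw [← sum_filter, sum_filter_eqOn_erase_eq_sum_update]
  simp only [update_self]

def planeRot (j k : Fin m) (c s : ℂ) : Matrix (Fin m) (Fin m) ℂ :=
  1 + (c - 1) • (single j j 1 + single k k 1) + s • (single j k 1 - single k j 1)

lemma isOrth_planeRot {j k : Fin m} (hjk : j ≠ k) {c s : ℂ} (hcs : c ^ 2 + s ^ 2 = 1) :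
    IsOrth (planeRot j k c s) := by
  rw [IsOrth, planeRot]
  set P : Matrix (Fin m) (Fin m) ℂ := single j j 1 + single k k 1
  set J : Matrix (Fin m) (Fin m) ℂ := single j k 1 - single k j 1
  have hP : Pᵀ = P := by simp [P, transpose_single]
  have hJ : Jᵀ = -J := by simp [J, transpose_single]
  have hPP : P * P = P := by simp [P, add_mul, mul_add, hjk, hjk.symm]
  have hPJ : P * J = J := by simp [P, J, add_mul, mul_sub, hjk, hjk.symm]
  have hJP : J * P = J := by
    simp [P, J, sub_mul, mul_add, hjk, hjk.symm]
    abel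
  have hJJ : J * J = -P := by
    simp [P, J, sub_mul, mul_sub, hjk, hjk.symm]
    abel
  clear_value P J
  simp only [transpose_add, transpose_smul, transpose_one, hP, hJ, add_mul, mul_add, one_mul,
    mul_one, smul_neg, neg_mul, smul_mul_assoc, mul_smul_comm, hPP, hPJ, hJP, hJJ]
  linear_combination (norm := module) hcs • P

lemma IsOrth.mul {A B : Matrix (Fin m) (Fin m) ℂ} (hA : IsOrth A) (hB : IsOrth B) :
    IsOrth (A * B) := by
  rw [IsOrth, transpose_mul, Matrix.mul_assoc, ← Matrix.mul_assoc Aᵀ, hA, Matrix.one_mul, hB]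

lemma IsOrth.det_mul_self {A : Matrix (Fin m) (Fin m) ℂ} (hA : IsOrth A) : (A * A).det = 1 := by
  have h := congrArg det hA
  rwa [det_mul, det_transpose, det_one, ← det_mul] at h

lemma act_mul_self_of_det_covariant {y : Tens m n}
    (hy : ∀ A : Matrix (Fin m) (Fin m) ℂ, IsOrth A → act A y = A.det • y)
    {A : Matrix (Fin m) (Fin m) ℂ} (hA : IsOrth A) : act (A * A) y = y := by
  rw [hy _ (hA.mul hA), hA.det_mul_self, one_smul]

lemma hasDerivAt_mul_apply {A B : ℂ → Matrix (Fin m) (Fin m) ℂ}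
    {A' B' : Matrix (Fin m) (Fin m) ℂ} {x : ℂ}
    (hA : ∀ a b, HasDerivAt (fun t => A t a b) (A' a b) x)
    (hB : ∀ a b, HasDerivAt (fun t => B t a b) (B' a b) x) (a b : Fin m) :
    HasDerivAt (fun t => (A t * B t) a b) ((A' * B x + A x * B') a b) x := by
  simp only [mul_apply, Matrix.add_apply, ← sum_add_distrib]
  exact HasDerivAt.fun_sum fun c _ => (hA a c).mul (hB c b)

lemma hasDerivAt_planeRot_apply (j k a b : Fin m) :
    HasDerivAt (fun t => planeRot j k (Complex.cos t) (Complex.sin t) a b)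
      ((single j k 1 - single k j 1 : Matrix (Fin m) (Fin m) ℂ) a b) 0 := by
  have h := ((((Complex.hasDerivAt_cos 0).sub_const 1).mul_const
    ((single j j 1 + single k k 1 : Matrix (Fin m) (Fin m) ℂ) a b)).add
    ((Complex.hasDerivAt_sin 0).mul_const
      ((single j k 1 - single k j 1 : Matrix (Fin m) (Fin m) ℂ) a b))).const_add
    ((1 : Matrix (Fin m) (Fin m) ℂ) a b)
  have hfun : (fun t => planeRot j k (Complex.cos t) (Complex.sin t) a b) = fun t =>
      (1 : Matrix (Fin m) (Fin m) ℂ) a b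
        + ((Complex.cos t - 1) * (single j j 1 + single k k 1 : Matrix (Fin m) (Fin m) ℂ) a b
          + Complex.sin t * (single j k 1 - single k j 1 : Matrix (Fin m) (Fin m) ℂ) a b) := by
    funext t
    simp only [planeRot, Matrix.add_apply, Matrix.smul_apply, smul_eq_mul, add_assoc]
  rw [hfun]
  exact h.congr_deriv (by simp)

lemma unitAct_comm_of_det_covariant {y : Tens m n}
    (hy : ∀ A : Matrix (Fin m) (Fin m) ℂ, IsOrth A → act A y = A.det • y) (j k : Fin m) :
    unitAct j k y = unitAct k j y := by
  rcases eq_or_ne j k with rfl | hjk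
  · rfl
  funext f
  let S t : Matrix (Fin m) (Fin m) ℂ := planeRot j k (Complex.cos t) (Complex.sin t)
  have hS0 : S 0 = 1 := by simp [S, planeRot]
  have hderiv := hasDerivAt_act_apply (R := fun t => S t * S t)
    (X := (single j k 1 - single k j 1) + (single j k 1 - single k j 1))
    (fun a b => by
      have h := hasDerivAt_mul_apply (hasDerivAt_planeRot_apply j k)
        (hasDerivAt_planeRot_apply j k) a b
      rwa [show planeRot j k (Complex.cos 0) (Complex.sin 0) = 1 from hS0, Matrix.mul_one,
        Matrix.one_mul] at h)
    (by rw [hS0, Matrix.mul_one]) y f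
  have hconst : (fun t => act (S t * S t) y f) = fun _ => y f := funext fun t =>
    congrFun (act_mul_self_of_det_covariant hy
      (isOrth_planeRot hjk (Complex.cos_sq_add_sin_sq t))) f
  rw [hconst] at hderiv
  have h0 := hderiv.unique (hasDerivAt_const 0 (y f))
  rw [lieAct_add, Pi.add_apply, lieAct_single_sub_single] at h0
  linear_combination h0 / 2

lemma unitAct_self_apply (j : Fin m) (y : Tens m n) (f : Fin n → Fin m) :
    unitAct j j y f = #{i | f i = j} * y f := by
  have h : ∀ i, (if f i = j then y (update f i j) else 0) = if f i = j then y f else 0 := by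
    intro i
    split_ifs with hi
    · rw [← hi, update_eq_self]
    · rfl
  simp [unitAct, h, sum_ite]

lemma sum_unitAct_unitAct_apply_of_harmonic {y : Tens m n} (hy : Harmonic y) (j : Fin m)
    (f : Fin n → Fin m) :
    ∑ k, unitAct j k (unitAct j k y) f = #{i | f i = j} * y f := by
  have hslot : ∀ i, f i = j → ∑ k, unitAct j k y (update f i k) = y f := by
    intro i hi
    simp only [unitAct]
    rw [sum_comm, sum_eq_single i]
    · simp [← hi]
    · intro i' _ hi'
      simp only [update_of_ne hi', sum_ite_irrel, hy i i' (Ne.symm hi'), sum_const_zero, ite_self]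
    · simp
  calc ∑ k, unitAct j k (unitAct j k y) f
      = ∑ i, if f i = j then ∑ k, unitAct j k y (update f i k) else 0 := by
        simp only [unitAct]
        rw [sum_comm]
        simp only [sum_ite_irrel, sum_const_zero]
    _ = ∑ i, if f i = j then y f else 0 := sum_congr rfl fun i _ => by
        split_ifs with hi
        · exact hslot i hi
        · rfl
    _ = #{i | f i = j} * y f := by simp [sum_ite]

lemma sum_unitAct_mul_conj (j k : Fin m) (x y : Tens m n) :
    ∑ f, unitAct j k x f * starRingEnd ℂ (y f)
      = ∑ f, x f * starRingEnd ℂ (unitAct k j y f) := by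
  simp only [unitAct, sum_mul, mul_sum, map_sum, apply_ite, map_zero, ite_mul, zero_mul, mul_zero]
  rw [sum_comm]
  conv_rhs => rw [sum_comm]
  refine sum_congr rfl fun i _ => ?_
  rw [← sum_filter, ← sum_filter]
  refine sum_nbij' (update · i k) (update · i j) ?_ ?_ ?_ ?_ ?_ <;>
    · intro a ha
      simp only [mem_filter, mem_univ, true_and] at ha
      simp [← ha]

lemma sum_card_fiber (f : Fin n → Fin m) : ∑ j, #{i | f i = j} = n := by
  simpa using (card_eq_sum_card_fiberwise (f := f) (s := univ) (t := univ) (by simp)).symm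

lemma lt_sum_sq_card_fiber {f : Fin n → Fin m} (hmn : m < n) :
    n < ∑ j, #{i | f i = j} ^ 2 := by
  obtain ⟨a, b, hab, hfab⟩ := Fintype.exists_ne_map_eq_of_card_lt f (by simpa using hmn)
  have hfiber : 2 ≤ #{i | f i = f a} := by
    rw [← card_pair hab]
    exact card_le_card fun i => by aesop
  calc n = ∑ j, #{i | f i = j} := (sum_card_fiber f).symm
    _ < ∑ j, #{i | f i = j} ^ 2 :=
        sum_lt_sum (fun j _ => Nat.le_self_pow two_ne_zero _) ⟨f a, mem_univ _, by nlinarith⟩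

noncomputable def normSqSum (y : Tens m n) : ℝ := ∑ f, Complex.normSq (y f)

lemma normSqSum_nonneg (y : Tens m n) : 0 ≤ normSqSum y :=
  sum_nonneg fun f _ => Complex.normSq_nonneg (y f)

lemma ofReal_normSqSum (y : Tens m n) :
    (normSqSum y : ℂ) = ∑ f, y f * starRingEnd ℂ (y f) := by
  simp [normSqSum, Complex.mul_conj]

lemma normSqSum_unitAct_self (j : Fin m) (y : Tens m n) :
    normSqSum (unitAct j j y) = ∑ f, (#{i | f i = j} : ℝ) ^ 2 * Complex.normSq (y f) := by
  simp [normSqSum, unitAct_self_apply, Complex.normSq_mul, sq]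

lemma sum_sum_normSqSum_unitAct {y : Tens m n} (hH : Harmonic y)
    (hE : ∀ j k, unitAct j k y = unitAct k j y) :
    ∑ j, ∑ k, normSqSum (unitAct j k y) = n * normSqSum y := by
  have hterm : ∀ j k, (normSqSum (unitAct j k y) : ℂ)
      = ∑ f, unitAct j k (unitAct j k y) f * starRingEnd ℂ (y f) := by
    intro j k
    rw [ofReal_normSqSum, sum_unitAct_mul_conj j k (unitAct j k y) y, ← hE j k]
  apply Complex.ofReal_injective
  push_cast
  calc ∑ j, ∑ k, (normSqSum (unitAct j k y) : ℂ)
      = ∑ f, (∑ j, ∑ k, unitAct j k (unitAct j k y) f) * starRingEnd ℂ (y f) := by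
        simp only [hterm, sum_mul]
        exact (sum_congr rfl fun j _ => sum_comm).trans sum_comm
    _ = ∑ f, n * (y f * starRingEnd ℂ (y f)) := by
        simp only [sum_unitAct_unitAct_apply_of_harmonic hH, ← sum_mul, ← Nat.cast_sum,
          sum_card_fiber, mul_assoc]
    _ = n * normSqSum y := by rw [ofReal_normSqSum, mul_sum]

theorem eq_zero_of_harmonic_of_unitAct_comm {y : Tens m n} (hH : Harmonic y)
    (hE : ∀ j k, unitAct j k y = unitAct k j y) (hmn : m < n) : y = 0 := by
  have hbound : ((n : ℝ) + 1) * normSqSum y ≤ n * normSqSum y :=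
    calc ((n : ℝ) + 1) * normSqSum y
        ≤ ∑ f, ((∑ j, #{i | f i = j} ^ 2 : ℕ) : ℝ) * Complex.normSq (y f) := by
          rw [normSqSum, mul_sum]
          gcongr with f
          · exact Complex.normSq_nonneg _
          · exact_mod_cast lt_sum_sq_card_fiber hmn
      _ = ∑ j, normSqSum (unitAct j j y) := by
          simp only [normSqSum_unitAct_self, Nat.cast_sum, Nat.cast_pow, sum_mul]
          exact sum_comm
      _ ≤ ∑ j, ∑ k, normSqSum (unitAct j k y) :=
          sum_le_sum fun j _ => single_le_sum (f := fun k => normSqSum (unitAct j k y))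
            (fun k _ => normSqSum_nonneg _) (mem_univ j)
      _ = n * normSqSum y := sum_sum_normSqSum_unitAct hH hE
  have hzero : normSqSum y = 0 := le_antisymm (by linarith) (normSqSum_nonneg y)
  funext f
  exact Complex.normSq_eq_zero.1
    ((sum_eq_zero_iff_of_nonneg fun f _ => Complex.normSq_nonneg _).1 hzero f (mem_univ f))

end

/-- If `Λ ∈ (V^{⊗ r_c})^{G,det}` is harmonic with `(Λ,Λ) ≠ 0` and `r < r_c`, then
`(V^{⊗r})^{G,det} = 0`. -/
theorem stmt_11 (m rc r : ℕ) (L : Tens m rc)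
    (hLdet : ∀ A : Matrix (Fin m) (Fin m) ℂ, IsOrth A → act A L = A.det • L)
    (hLharm : Harmonic L) (hLnorm : form L L ≠ 0) (hr : r < rc)
    (x : Tens m r)
    (hx : ∀ A : Matrix (Fin m) (Fin m) ℂ, IsOrth A → act A x = A.det • x) :
    x = 0 := by
  rcases le_or_gt rc m with hrc | hmrc
  · exact eq_zero_of_det_covariant_of_lt hx (hr.trans_le hrc)
  · have hL : L = 0 := eq_zero_of_harmonic_of_unitAct_comm hLharm
      (unitAct_comm_of_det_covariant hLdet) hmrc
    simp [hL, form] at hLnorm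

end EnhBrauer
end

section
/- Let V = ℂ^m and Σ_r ∈ End(V^{⊗r}) the total antisymmetrizer ∑_{π∈S_r} ε(π)π. Then for r ≥ 2, contracting the last strand of Σ_r with Č and Ĉ gives −(r−1−m)·Σ_{r−1}, i.e., ∑_{π∈S_r} ε(π)·(id^{⊗(r−1)}⊗Ĉ)∘(π⊗id)∘(id^{⊗(r−1)}⊗Č) = −(r−1−m)·Σ_{r−1} as endomorphisms of V^{⊗(r−1)}. -/
open scoped BigOperators

namespace EnhBrauer

/-- Extend a permutation of `Fin n` to `Fin (n+1)` fixing the last element. -/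
noncomputable def extLast {n : ℕ} (τ : Equiv.Perm (Fin n)) : Equiv.Perm (Fin (n + 1)) :=
  (finSuccEquivLast.symm.permCongr) τ.optionCongr

@[simp] lemma extLast_castSucc {n : ℕ} (τ : Equiv.Perm (Fin n)) (k : Fin n) :
    extLast τ (Fin.castSucc k) = Fin.castSucc (τ k) := by
  simp [extLast, Equiv.permCongr_apply]

@[simp] lemma extLast_last {n : ℕ} (τ : Equiv.Perm (Fin n)) :
    extLast τ (Fin.last n) = Fin.last n := by
  simp [extLast, Equiv.permCongr_apply]

@[simp] lemma sign_extLast {n : ℕ} (τ : Equiv.Perm (Fin n)) :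
    Equiv.Perm.sign (extLast τ) = Equiv.Perm.sign τ := by
  simp [extLast, Equiv.Perm.sign_permCongr, Equiv.optionCongr_sign]

lemma extLast_injective {n : ℕ} : Function.Injective (extLast (n := n)) := by
  intro τ τ' h
  ext k
  have := congrArg (fun σ : Equiv.Perm (Fin (n+1)) => σ (Fin.castSucc k)) h
  exact congrArg Fin.val (Fin.castSucc_injective n (by simpa using this))

lemma decomp_bij (n : ℕ) :
    Function.Bijective (fun p : Fin (n+1) × Equiv.Perm (Fin n) =>
      Equiv.swap p.1 (Fin.last n) * extLast p.2) := by
  rw [Fintype.bijective_iff_injective_and_card]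
  constructor
  · rintro ⟨j, τ⟩ ⟨j', τ'⟩ h
    have hj : j = j' := by
      have := congrArg (fun σ : Equiv.Perm (Fin (n+1)) => σ (Fin.last n)) h
      simpa [Equiv.Perm.mul_apply] using this
    subst hj
    have : extLast τ = extLast τ' := mul_left_cancel h
    exact Prod.ext rfl (extLast_injective this)
  · simp [Fintype.card_perm, Nat.factorial_succ]

lemma castAdd_one_eq_castSucc {n : ℕ} (k : Fin n) : Fin.castAdd 1 k = Fin.castSucc k := rfl

lemma natAdd_zero_eq_last {n : ℕ} : Fin.natAdd n (0 : Fin 1) = Fin.last n := rfl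

lemma inner_sum (m n : ℕ) (x : Tens m n) (f : Fin n → Fin m)
    (j : Fin (n+1)) (τ : Equiv.Perm (Fin n)) :
    (∑ i : Fin m,
      ((Equiv.Perm.sign (Equiv.swap j (Fin.last n) * extLast τ) : ℤ) : ℂ) *
        tmul x (fun g => if g 0 = i then (1 : ℂ) else 0)
          (Fin.snoc f i ∘ (Equiv.swap j (Fin.last n) * extLast τ))) =
    (if j = Fin.last n then (m : ℂ) else -1) *
      (((Equiv.Perm.sign τ : ℤ) : ℂ) * x (f ∘ τ)) := by
  classical
  have hsig : ((Equiv.Perm.sign (Equiv.swap j (Fin.last n) * extLast τ) : ℤ) : ℂ)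
      = (if j = Fin.last n then 1 else -1) * ((Equiv.Perm.sign τ : ℤ) : ℂ) := by
    rw [Equiv.Perm.sign_mul, Equiv.Perm.sign_swap', sign_extLast]
    split <;> push_cast <;> ring
  simp only [tmul, Function.comp_apply, Equiv.Perm.mul_apply, castAdd_one_eq_castSucc,
    natAdd_zero_eq_last, extLast_castSucc, extLast_last, Equiv.swap_apply_right]
  by_cases hj : j = Fin.last n
  · subst hj
    have harg : ∀ i : Fin m,
        (fun k : Fin n => (Fin.snoc f i : Fin (n+1) → Fin m)
          (Equiv.swap (Fin.last n) (Fin.last n) (Fin.castSucc (τ k)))) = f ∘ τ := by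
      intro i; funext k
      simp [Equiv.swap_self]
    simp only [harg, Fin.snoc_last, if_pos rfl, hsig, if_pos rfl, mul_one, one_mul]
    rw [Finset.sum_const, Finset.card_univ, Fintype.card_fin, nsmul_eq_mul]
    simp
  · obtain ⟨j₀, rfl⟩ := Fin.exists_castSucc_eq.mpr hj
    have hne : Fin.castSucc j₀ ≠ Fin.last n := hj
    have harg :
        (fun k : Fin n => (Fin.snoc f (f j₀) : Fin (n+1) → Fin m)
          (Equiv.swap (Fin.castSucc j₀) (Fin.last n) (Fin.castSucc (τ k)))) = f ∘ τ := by
      funext k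
      by_cases hk : τ k = j₀
      · rw [hk, Equiv.swap_apply_left, Fin.snoc_last]
        simp [hk]
      · rw [Equiv.swap_apply_of_ne_of_ne
          (fun h => hk (Fin.castSucc_injective n h)) (Fin.castSucc_lt_last (τ k)).ne,
          Fin.snoc_castSucc]
        rfl
    have hsnoc : ∀ i : Fin m, (Fin.snoc f i : Fin (n+1) → Fin m) (Fin.castSucc j₀) = f j₀ :=
      fun i => by simp
    simp only [hsnoc, hsig, if_neg hj]
    rw [Finset.sum_congr rfl (fun i _ => show
        (-1 * ((Equiv.Perm.sign τ : ℤ) : ℂ)) *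
          (x (fun k => (Fin.snoc f i : Fin (n+1) → Fin m)
            (Equiv.swap (Fin.castSucc j₀) (Fin.last n) (Fin.castSucc (τ k)))) *
            (if f j₀ = i then (1 : ℂ) else 0)) =
        (if f j₀ = i then (-1 * ((Equiv.Perm.sign τ : ℤ) : ℂ)) *
          x (fun k => (Fin.snoc f i : Fin (n+1) → Fin m)
            (Equiv.swap (Fin.castSucc j₀) (Fin.last n) (Fin.castSucc (τ k)))) else 0)
        by split <;> ring)]
    rw [Finset.sum_ite_eq]
    simp only [Finset.mem_univ, if_pos, harg]
    ring

/-- Closing the last strand of the antisymmetrizer: with `r = n + 1 ≥ 2` and `δ = m`,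
`∑_i (id^{⊗n} ⊗ Ĉ) ∘ Σ_{n+1} ∘ (id^{⊗n} ⊗ Č) = -(n - m) · Σ_n` on `V^{⊗n}`. -/
theorem stmt_16 (m n : ℕ) (hn : 1 ≤ n) (x : Tens m n) (f : Fin n → Fin m) :
    (∑ i : Fin m,
        SigmaA m (n + 1) (tmul x fun g => if g 0 = i then (1 : ℂ) else 0) (Fin.snoc f i)) =
      (-((n : ℂ) - (m : ℂ))) * SigmaA m n x f := by
  classical
  unfold SigmaA
  rw [Finset.sum_comm]
  rw [← Equiv.sum_comp (Equiv.ofBijective _ (decomp_bij n))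
      (fun σ : Equiv.Perm (Fin (n+1)) => ∑ i : Fin m,
        ((Equiv.Perm.sign σ : ℤ) : ℂ) *
          tmul x (fun g => if g 0 = i then (1 : ℂ) else 0) (Fin.snoc f i ∘ σ))]
  simp only [Equiv.ofBijective_apply]
  rw [Fintype.sum_prod_type]
  have := fun (j : Fin (n+1)) (τ : Equiv.Perm (Fin n)) => inner_sum m n x f j τ
  simp only [this]
  simp_rw [← Finset.mul_sum]
  rw [← Finset.sum_mul]
  have hc : (∑ j : Fin (n+1), (if j = Fin.last n then (m : ℂ) else -1)) = (m : ℂ) - n := by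
    have h1 : ∀ j : Fin (n+1),
        (if j = Fin.last n then (m : ℂ) else -1)
          = (if j = Fin.last n then (m : ℂ) + 1 else 0) + (-1) := by
      intro j; split <;> ring
    simp_rw [h1]
    rw [Finset.sum_add_distrib, Finset.sum_ite_eq' Finset.univ]
    simp only [Finset.mem_univ, if_pos, Finset.sum_const, Finset.card_univ, Fintype.card_fin,
      nsmul_eq_mul]
    push_cast; ring
  rw [hc]
  ring


end EnhBrauer
end
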